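/- Let $X \in \mathbb{R}^{n \times m}$, $\sigma > 0$, $u \in \mathbb{R}^m$ the all-ones vector, $\mu_X = \frac{1}{m} X u$, and $C_X = \frac{1}{m}(XX^\top - \frac{1}{m} Xuu^\top X^\top)$. Then the function $(\Theta,\beta) \mapsto \|\Theta X + \beta u^\top - X\|_F^2 + m\sigma^2\|\Theta\|_F^2$ attains its global minimum at $\hat{\Theta}_2 = C_X(C_X + \sigma^2 I_n)^{-1}$ and $\hat{\beta}_2 = (I_n - \hat{\Theta}_2)\mu_X$. -/

import Mathlib

open MeasureTheory ProbabilityTheory Matrix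

noncomputable def frobSq {n m : ℕ} (M : Matrix (Fin n) (Fin m) ℝ) : ℝ :=
  ∑ i, ∑ j, (M i j) ^ 2

def onesVec (m : ℕ) : Fin m → ℝ := fun _ => 1

noncomputable def covM {n m : ℕ} (Y : Matrix (Fin n) (Fin m) ℝ) : Matrix (Fin n) (Fin n) ℝ :=
  (m : ℝ)⁻¹ • (Y * Yᵀ - (m : ℝ)⁻¹ • (Y * vecMulVec (onesVec m) (onesVec m) * Yᵀ))

noncomputable def meanV {n m : ℕ} (Y : Matrix (Fin n) (Fin m) ℝ) : Fin n → ℝ :=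
  (m : ℝ)⁻¹ • Y.mulVec (onesVec m)

/-!
Centering `X` splits the residual `ΘX + βuᵀ - X` into `(Θ - 1) X_c`, whose rows are orthogonal
to `u`, and the rank-one term `((Θ - 1) μ_X + β) uᵀ`. Hence the risk is `m` times the ridge risk
`tr((Θ - 1) C_X (Θ - 1)ᵀ) + σ² tr(ΘΘᵀ)` plus `m ‖(Θ - 1) μ_X + β‖²`. The second term vanishes at
`β̂₂`, and completing the square with `S = C_X + σ² I` writes the ridge risk as its value at
`C_X S⁻¹` plus `tr((Θ - C_X S⁻¹) S (Θ - C_X S⁻¹)ᵀ) ≥ 0`.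
-/

section Ridge

variable {ι : Type*} [Fintype ι]

lemma trace_mul_transpose_of_transpose_eq {C : Matrix ι ι ℝ} (hC : Cᵀ = C) (A : Matrix ι ι ℝ) :
    (C * Aᵀ).trace = (A * C).trace := by
  rw [← trace_transpose, transpose_mul, transpose_transpose, hC]

variable [DecidableEq ι]

noncomputable def ridgeRisk (C : Matrix ι ι ℝ) (s : ℝ) (Θ : Matrix ι ι ℝ) : ℝ :=
  ((Θ - 1) * C * (Θ - 1)ᵀ).trace + s * (Θ * Θᵀ).trace

lemma ridgeRisk_eq {C : Matrix ι ι ℝ} (hC : Cᵀ = C) (s : ℝ) (Θ : Matrix ι ι ℝ) :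
    ridgeRisk C s Θ = (Θ * (C + s • 1) * Θᵀ).trace - 2 * (Θ * C).trace + C.trace := by
  simp only [ridgeRisk, transpose_sub, transpose_one, Matrix.sub_mul, Matrix.mul_sub,
    Matrix.mul_add, Matrix.add_mul, Matrix.one_mul, Matrix.mul_one, Matrix.mul_smul,
    Matrix.smul_mul, trace_sub, trace_add, trace_smul, smul_eq_mul,
    trace_mul_transpose_of_transpose_eq hC]
  ring

lemma ridgeRisk_eq_add_trace {C : Matrix ι ι ℝ} (hC : Cᵀ = C) {s : ℝ}
    (hS : IsUnit (C + s • 1).det) (Θ : Matrix ι ι ℝ) :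
    ridgeRisk C s Θ = ridgeRisk C s (C * (C + s • 1)⁻¹)
      + ((Θ - C * (C + s • 1)⁻¹) * (C + s • 1) * (Θ - C * (C + s • 1)⁻¹)ᵀ).trace := by
  set S := C + s • 1
  set T := C * S⁻¹
  have hTS : T * S = C := by rw [Matrix.mul_assoc, nonsing_inv_mul _ hS, Matrix.mul_one]
  have hSTt : S * Tᵀ = C := by
    have hSt : Sᵀ = S := by simp [S, hC]
    rw [transpose_mul, transpose_nonsing_inv, hSt, hC, ← Matrix.mul_assoc,
      mul_nonsing_inv _ hS, Matrix.one_mul]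
  rw [ridgeRisk_eq hC, ridgeRisk_eq hC]
  simp only [transpose_sub, Matrix.sub_mul, Matrix.mul_sub, trace_sub]
  rw [Matrix.mul_assoc T S Tᵀ, Matrix.mul_assoc Θ S Tᵀ, hSTt, hTS,
    trace_mul_transpose_of_transpose_eq hC]
  ring

lemma ridgeRisk_le {C : Matrix ι ι ℝ} (hC : C.PosSemidef) {s : ℝ} (hs : 0 < s)
    (Θ : Matrix ι ι ℝ) : ridgeRisk C s (C * (C + s • 1)⁻¹) ≤ ridgeRisk C s Θ := by
  have hS : (C + s • 1).PosDef := PosDef.posSemidef_add hC (PosDef.one.smul hs)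
  have hCt : Cᵀ = C := by rw [← conjTranspose_eq_transpose_of_trivial, hC.isHermitian.eq]
  rw [ridgeRisk_eq_add_trace hCt (isUnit_iff_ne_zero.2 hS.det_pos.ne') Θ,
    le_add_iff_nonneg_right]
  simpa using (hS.posSemidef.mul_mul_conjTranspose_same (Θ - C * (C + s • 1)⁻¹)).trace_nonneg

end Ridge

section Centering

variable {n m : ℕ}

lemma frobSq_eq_trace (M : Matrix (Fin n) (Fin m) ℝ) : frobSq M = (M * Mᵀ).trace := by
  simp [frobSq, Matrix.trace, Matrix.mul_apply, sq]

lemma frobSq_add_vecMulVec_of_mulVec_eq_zero {Y : Matrix (Fin n) (Fin m) ℝ}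
    {w : Fin m → ℝ} (hY : Y *ᵥ w = 0) (v : Fin n → ℝ) :
    frobSq (Y + vecMulVec v w) = frobSq Y + (v ⬝ᵥ v) * (w ⬝ᵥ w) := by
  simp only [frobSq, dotProduct, Matrix.add_apply, vecMulVec_apply, Finset.sum_mul,
    ← Finset.sum_add_distrib]
  refine Finset.sum_congr rfl fun i _ => ?_
  have hrow : ∑ j, Y i j * w j = 0 := congrFun hY i
  calc ∑ j, (Y i j + v i * w j) ^ 2
      = ∑ j, (Y i j ^ 2 + 2 * v i * (Y i j * w j) + v i * v i * (w j * w j)) :=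
        Finset.sum_congr rfl fun j _ => by ring
    _ = ∑ j, Y i j ^ 2 + 2 * v i * ∑ j, Y i j * w j + v i * v i * ∑ j, w j * w j := by
        rw [Finset.sum_add_distrib, Finset.sum_add_distrib, Finset.mul_sum, Finset.mul_sum]
    _ = _ := by rw [hrow, mul_zero, add_zero]

noncomputable def centered (X : Matrix (Fin n) (Fin m) ℝ) : Matrix (Fin n) (Fin m) ℝ :=
  X - vecMulVec (meanV X) (onesVec m)

lemma onesVec_dotProduct_self (m : ℕ) : onesVec m ⬝ᵥ onesVec m = m := by
  simp [onesVec, dotProduct]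

lemma mulVec_onesVec (X : Matrix (Fin n) (Fin m) ℝ) :
    X *ᵥ onesVec m = (m : ℝ) • meanV X := by
  rcases eq_or_ne m 0 with rfl | hm
  · ext i; simp [mulVec, dotProduct]
  · rw [meanV, smul_smul, mul_inv_cancel₀ (Nat.cast_ne_zero.mpr hm), one_smul]

lemma centered_mulVec_onesVec (X : Matrix (Fin n) (Fin m) ℝ) :
    centered X *ᵥ onesVec m = 0 := by
  rw [centered, sub_mulVec, mulVec_onesVec, vecMulVec_mulVec, onesVec_dotProduct_self,
    op_smul_eq_smul, sub_self]

lemma centered_mul_transpose (X : Matrix (Fin n) (Fin m) ℝ) :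
    centered X * (centered X)ᵀ = (m : ℝ) • covM X := by
  rcases eq_or_ne m 0 with rfl | hm
  · ext i j; simp [mul_apply]
  have hm' : (m : ℝ) ≠ 0 := Nat.cast_ne_zero.mpr hm
  have hX : X * vecMulVec (onesVec m) (onesVec m) * Xᵀ
      = (m : ℝ) • (m : ℝ) • vecMulVec (meanV X) (meanV X) := by
    rw [mul_vecMulVec, vecMulVec_mul, vecMul_transpose, mulVec_onesVec, smul_vecMulVec,
      vecMulVec_smul]
  nth_rw 2 [centered]
  rw [transpose_sub, Matrix.mul_sub, transpose_vecMulVec, mul_vecMulVec, centered_mulVec_onesVec,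
    zero_vecMulVec, sub_zero, centered, Matrix.sub_mul, vecMulVec_mul, vecMul_transpose,
    mulVec_onesVec, vecMulVec_smul, covM, hX, smul_smul, mul_inv_cancel₀ hm', one_smul,
    inv_smul_smul₀ hm']

lemma covM_eq_smul_centered_mul_transpose (X : Matrix (Fin n) (Fin m) ℝ) :
    covM X = (m : ℝ)⁻¹ • (centered X * (centered X)ᵀ) := by
  rcases eq_or_ne m 0 with rfl | hm
  · simp [covM]
  · rw [centered_mul_transpose, inv_smul_smul₀ (Nat.cast_ne_zero.mpr hm)]

lemma covM_posSemidef (X : Matrix (Fin n) (Fin m) ℝ) : (covM X).PosSemidef := by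
  rw [covM_eq_smul_centered_mul_transpose, ← conjTranspose_eq_transpose_of_trivial]
  exact (posSemidef_self_mul_conjTranspose _).smul (inv_nonneg.2 (Nat.cast_nonneg m))

lemma frobSq_residual_add_eq_ridgeRisk (X : Matrix (Fin n) (Fin m) ℝ) (σ : ℝ)
    (Θ : Matrix (Fin n) (Fin n) ℝ) (β : Fin n → ℝ) :
    frobSq (Θ * X + vecMulVec β (onesVec m) - X) + (m : ℝ) * σ ^ 2 * frobSq Θ
      = m * (ridgeRisk (covM X) (σ ^ 2) Θ
          + ((Θ - 1) *ᵥ meanV X + β) ⬝ᵥ ((Θ - 1) *ᵥ meanV X + β)) := by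
  have hsplit : Θ * X + vecMulVec β (onesVec m) - X
      = (Θ - 1) * centered X + vecMulVec ((Θ - 1) *ᵥ meanV X + β) (onesVec m) := by
    rw [centered, Matrix.mul_sub, mul_vecMulVec, add_vecMulVec, Matrix.sub_mul, Matrix.one_mul]
    abel
  have horth : ((Θ - 1) * centered X) *ᵥ onesVec m = 0 := by
    rw [← mulVec_mulVec, centered_mulVec_onesVec, mulVec_zero]
  rw [hsplit, frobSq_add_vecMulVec_of_mulVec_eq_zero horth, onesVec_dotProduct_self,
    frobSq_eq_trace, frobSq_eq_trace, transpose_mul, Matrix.mul_assoc,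
    ← Matrix.mul_assoc (centered X), centered_mul_transpose, ridgeRisk]
  simp only [Matrix.smul_mul, Matrix.mul_smul, trace_smul, smul_eq_mul, ← Matrix.mul_assoc]
  ring

end Centering

theorem stmt10 {n m : ℕ} (X : Matrix (Fin n) (Fin m) ℝ) (σ : ℝ) (hσ : 0 < σ) :
    ∀ (Θ : Matrix (Fin n) (Fin n) ℝ) (β : Fin n → ℝ),
      frobSq (covM X * (covM X + σ ^ 2 • (1 : Matrix (Fin n) (Fin n) ℝ))⁻¹ * X
            + vecMulVec (((1 : Matrix (Fin n) (Fin n) ℝ)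
                - covM X * (covM X + σ ^ 2 • (1 : Matrix (Fin n) (Fin n) ℝ))⁻¹).mulVec
              (meanV X)) (onesVec m) - X)
          + (m : ℝ) * σ ^ 2 *
            frobSq (covM X * (covM X + σ ^ 2 • (1 : Matrix (Fin n) (Fin n) ℝ))⁻¹)
        ≤ frobSq (Θ * X + vecMulVec β (onesVec m) - X) + (m : ℝ) * σ ^ 2 * frobSq Θ := by
  intro Θ β
  set T := covM X * (covM X + σ ^ 2 • (1 : Matrix (Fin n) (Fin n) ℝ))⁻¹
  have hmean : (T - 1) *ᵥ meanV X + (1 - T) *ᵥ meanV X = 0 := by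
    rw [← add_mulVec, sub_add_sub_cancel, sub_self, zero_mulVec]
  rw [frobSq_residual_add_eq_ridgeRisk, frobSq_residual_add_eq_ridgeRisk, hmean,
    dotProduct_zero, add_zero]
  gcongr
  exact le_add_of_le_of_nonneg (ridgeRisk_le (covM_posSemidef X) (by positivity) Θ)
    (Finset.sum_nonneg fun i _ => mul_self_nonneg _)
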